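/- Let μ be a regular uncountable cardinal, ⟨T_ξ : ξ < μ⟩ a ⊆-increasing continuous sequence of trees with T_ξ ⊆ 2^{<α(T_ξ)} and α(T_ξ) < μ strictly increasing with sup μ, and ⟨f_ξ : ξ < μ⟩ functions with f_ξ a witness for T_ξ such that ζ < ξ implies f_ζ(η) ⊴ f_ξ(η) for all η ∈ T_ζ. Suppose ρ ∈ 2^μ is such that ρ↾β ∈ ⋃_ξ T_ξ for all β < μ, and S⁺ ⊆ μ is a stationary set of limit ordinals δ with α(T_δ) = δ and ρ↾δ ∈ range(f_δ). Then there exist ξ* < μ and ρ* ∈ T_{ξ*} such that for stationarily many δ ∈ S⁺, f_δ(ρ*) = ρ↾δ; consequently ρ = ⋃_{ξ* ≤ ξ < μ} f_ξ(ρ*). -/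

import Mathlib

open Ordinal Set Cardinal

/-- A transfinite binary sequence: a length and values, zero beyond the length. -/
structure BSeq where
  len : Ordinal.{0}
  val : Ordinal.{0} → Bool
  val_eq_false : ∀ β, len ≤ β → val β = false

namespace BSeq

/-- The empty sequence. -/
def nil : BSeq := ⟨0, fun _ => false, fun _ _ => rfl⟩

/-- Restriction `η↾β` of a sequence to length `β`. -/
noncomputable def restrict (η : BSeq) (β : Ordinal) : BSeq :=
  ⟨min η.len β, fun γ => if γ < β then η.val γ else false, by
    intro γ hγ
    rcases min_le_iff.mp hγ with h | h
    · by_cases hb : γ < β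
      · simpa [hb] using η.val_eq_false γ h
      · simp [hb]
    · simp [not_lt.mpr h]⟩

/-- `ν ⊴ η` : `ν` is an initial segment of `η`. -/
def IsInitSeg (ν η : BSeq) : Prop :=
  ν.len ≤ η.len ∧ ∀ β < ν.len, ν.val β = η.val β

/-- `ν ◁ η` : `ν` is a proper initial segment of `η`. -/
def IsStrictInitSeg (ν η : BSeq) : Prop :=
  ν.IsInitSeg η ∧ ν.len < η.len

/-- `η⌢⟨b⟩`, appending one bit. -/
noncomputable def snoc (η : BSeq) (b : Bool) : BSeq :=
  ⟨η.len + 1, fun β => if β = η.len then b else η.val β, by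
    intro β hβ
    have h1 : η.len < β := by
      exact lt_of_lt_of_le (lt_add_one η.len) hβ
    rw [if_neg (ne_of_gt h1)]
    exact η.val_eq_false β h1.le⟩

end BSeq

/-- The level `T_{[β]} = T ∩ 2^β`. -/
def level (T : Set BSeq) (β : Ordinal) : Set BSeq := {η ∈ T | η.len = β}

/-- `T_{[<β]} = T ∩ 2^{<β}`. -/
def levelLT (T : Set BSeq) (β : Ordinal) : Set BSeq := {η ∈ T | η.len < β}

/-- `lim_δ(T) = {η ∈ 2^δ : ∀ β < δ, η↾β ∈ T}`. -/
def limAt (T : Set BSeq) (δ : Ordinal) : Set BSeq :=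
  {η | η.len = δ ∧ ∀ β < δ, η.restrict β ∈ T}

/-- `T ⊆ 2^{<α}` is an `α`-tree. -/
structure IsTree (α : Ordinal) (T : Set BSeq) : Prop where
  limit : Order.IsSuccLimit α
  len_lt : ∀ η ∈ T, η.len < α
  nil_mem : BSeq.nil ∈ T
  downClosed : ∀ ν η : BSeq, ν.IsStrictInitSeg η → η ∈ T → ν ∈ T
  succ_mem : ∀ η ∈ T, ∀ b : Bool, η.snoc b ∈ T
  ext_mem : ∀ η ∈ T, ∀ β, η.len ≤ β → β < α → ∃ ρ ∈ T, η.IsInitSeg ρ ∧ ρ.len = β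

/-- `T` has true height `α`: every node lies on a cofinal branch through `T`. -/
def TrueHeight (α : Ordinal) (T : Set BSeq) : Prop :=
  ∀ η ∈ T, ∃ ν : BSeq, ν.len = α ∧ η.IsStrictInitSeg ν ∧ ∀ β < α, ν.restrict β ∈ T

/-- A condition of the forcing `Q`: a tree of true height `α` (a limit ordinal)
omitting at most one limit point at each limit level. -/
structure IsCond (α : Ordinal) (T : Set BSeq) : Prop where
  tree : IsTree α T
  trueHeight : TrueHeight α T
  omits_le_one : ∀ δ < α, Order.IsSuccLimit δ → (limAt T δ \ level T δ).Subsingleton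

/-- The end-extension order of `Q`. -/
def QLe (α₁ : Ordinal) (T₁ : Set BSeq) (α₂ : Ordinal) (T₂ : Set BSeq) : Prop :=
  α₁ ≤ α₂ ∧ T₁ = levelLT T₂ α₁

/-- `f` is a witness for `T` (of height `α`). -/
def IsWitness (α : Ordinal) (T : Set BSeq) (f : BSeq → BSeq) : Prop :=
  ∀ η ∈ T, f η ∈ limAt T α ∧ η.IsStrictInitSeg (f η)

/-- The order of `Q^*`. -/
def QsLe (α₁ : Ordinal) (T₁ : Set BSeq) (f₁ : BSeq → BSeq)
    (α₂ : Ordinal) (T₂ : Set BSeq) (f₂ : BSeq → BSeq) : Prop :=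
  QLe α₁ T₁ α₂ T₂ ∧ ∀ η ∈ T₁, (f₁ η).IsInitSeg (f₂ η)

/-- `C` is a club (closed unbounded) subset of `μ`. -/
def IsClubIn (C : Set Ordinal) (μ : Ordinal) : Prop :=
  C ⊆ Set.Iio μ ∧
  (∀ δ < μ, Order.IsSuccLimit δ → (∀ β < δ, ∃ γ ∈ C, β < γ ∧ γ < δ) → δ ∈ C) ∧
  (∀ β < μ, ∃ γ ∈ C, β < γ ∧ γ < μ)

/-- `S` is stationary in `μ`. -/
def IsStationaryIn (S : Set Ordinal) (μ : Ordinal) : Prop :=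
  ∀ C, IsClubIn C μ → (S ∩ C).Nonempty

/-- The set of accumulation points of a set of ordinals. -/
def accPts (C : Set Ordinal) : Set Ordinal :=
  {β | 0 < β ∧ ∀ γ < β, ∃ δ ∈ C, γ < δ ∧ δ < β}

/-!
Each `δ ∈ S⁺` comes with a node `η_δ ∈ T_δ` such that `f_δ(η_δ) = ρ↾δ`. A witness strictly extends
its argument, so `η_δ = ρ↾β_δ` with `β_δ < δ`. By Fodor's lemma `δ ↦ β_δ` takes a constant value `β*`
on a stationary set, and `ρ* = ρ↾β*` works: it lies in some `T_{ξ*}`, and for `ξ* ≤ ξ < μ` the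
sequence `f_ξ(ρ*)` is an initial segment of `f_δ(ρ*) = ρ↾δ` for every larger `δ` of that set.
-/

open Order

namespace BSeq

instance : Inhabited BSeq := ⟨nil⟩

theorem ext {x y : BSeq} (hlen : x.len = y.len) (hval : ∀ β < x.len, x.val β = y.val β) :
    x = y := by
  obtain ⟨lx, vx, hx⟩ := x
  obtain ⟨ly, vy, hy⟩ := y
  subst hlen
  simp only [mk.injEq, true_and]
  funext β
  by_cases hβ : β < lx
  · exact hval β hβ
  · rw [hx β (not_lt.1 hβ), hy β (not_lt.1 hβ)]

theorem IsInitSeg.trans {x y z : BSeq} (hxy : x.IsInitSeg y) (hyz : y.IsInitSeg z) :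
    x.IsInitSeg z :=
  ⟨hxy.1.trans hyz.1, fun β hβ => (hxy.2 β hβ).trans (hyz.2 β (hβ.trans_le hxy.1))⟩

theorem len_restrict_of_le {η : BSeq} {β : Ordinal} (h : β ≤ η.len) : (η.restrict β).len = β :=
  min_eq_right h

theorem restrict_isInitSeg (η : BSeq) (β : Ordinal) : (η.restrict β).IsInitSeg η :=
  ⟨min_le_left _ _, fun _ hγ => if_pos (hγ.trans_le (min_le_right _ _))⟩

theorem IsInitSeg.eq_restrict {ν η : BSeq} (h : ν.IsInitSeg η) : ν = η.restrict ν.len :=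
  ext (len_restrict_of_le h.1).symm fun β hβ => (h.2 β hβ).trans (if_pos hβ).symm

end BSeq

namespace Ordinal

theorem exists_lt_apply_le_nfp (F : Ordinal → Ordinal) (a : Ordinal) {x : Ordinal}
    (hx : x < nfp F a) : ∃ y, x < y ∧ F y ≤ nfp F a := by
  obtain ⟨n, hn⟩ := lt_nfp_iff.1 hx
  refine ⟨F^[n] a, hn, ?_⟩
  simpa only [Function.iterate_succ_apply'] using iterate_le_nfp F a (n + 1)

theorem isSuccLimit_nfp {F : Ordinal → Ordinal} (hF : ∀ x, x < F x) (a : Ordinal) :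
    IsSuccLimit (nfp F a) := by
  refine isSuccLimit_iff.2 ⟨?_, isSuccPrelimit_of_succ_lt fun x hx => ?_⟩
  · exact ((hF a).trans_le (by simpa using iterate_le_nfp F a 1)).ne_bot
  · obtain ⟨y, hxy, hFy⟩ := exists_lt_apply_le_nfp F a hx
    exact (succ_le_of_lt hxy).trans_lt ((hF y).trans_le hFy)

end Ordinal

section Club

variable {o : Ordinal} {S : Set Ordinal}

theorem isClubIn_Ioo (ho : IsSuccLimit o) {ξ : Ordinal} (hξ : ξ < o) :
    IsClubIn (Ioo ξ o) o := by
  refine ⟨fun _ hx => hx.2, fun δ hδ hδlim happ => ?_, fun β hβ => ?_⟩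
  · obtain ⟨γ, hγ, -, hγδ⟩ := happ 0 hδlim.bot_lt
    exact ⟨hγ.1.trans hγδ, hδ⟩
  · have hlt := ho.succ_lt (max_lt hβ hξ)
    exact ⟨succ (max β ξ), ⟨(le_max_right β ξ).trans_lt (lt_succ _), hlt⟩,
      (le_max_left β ξ).trans_lt (lt_succ _), hlt⟩

theorem IsStationaryIn.mono {S' : Set Ordinal} (hS : IsStationaryIn S o) (h : S ∩ Iio o ⊆ S') :
    IsStationaryIn S' o := fun C hC =>
  let ⟨δ, hδS, hδC⟩ := hS C hC
  ⟨δ, h ⟨hδS, hC.1 hδC⟩, hδC⟩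

theorem IsStationaryIn.exists_gt (hS : IsStationaryIn S o) (ho : IsSuccLimit o) {ξ : Ordinal}
    (hξ : ξ < o) : ∃ δ ∈ S, ξ < δ ∧ δ < o :=
  let ⟨δ, hδS, hδ⟩ := hS _ (isClubIn_Ioo ho hξ)
  ⟨δ, hδS, hδ⟩

def diagInter (C : Ordinal → Set Ordinal) (o : Ordinal) : Set Ordinal :=
  {δ | δ < o ∧ ∀ β < δ, δ ∈ C β}

theorem diagInter_closed {C : Ordinal → Set Ordinal} (hC : ∀ β < o, IsClubIn (C β) o) {δ : Ordinal}
    (hδ : δ < o) (hδlim : IsSuccLimit δ)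
    (happ : ∀ β < δ, ∃ γ ∈ diagInter C o, β < γ ∧ γ < δ) : δ ∈ diagInter C o := by
  refine ⟨hδ, fun β hβ => (hC β (hβ.trans hδ)).2.1 δ hδ hδlim fun γ hγ => ?_⟩
  obtain ⟨γ', hγ', hlt, hγ'δ⟩ := happ (max β γ) (max_lt hβ hγ)
  exact ⟨γ', hγ'.2 β ((le_max_left β γ).trans_lt hlt), (le_max_right β γ).trans_lt hlt, hγ'δ⟩

end Club

section Regular

variable {μ : Cardinal.{0}}

theorem iSup_Iio_lt_ord (hμ : μ.IsRegular) {x : Ordinal} (hx : x < μ.ord)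
    {g : Ordinal → Ordinal} (hg : ∀ β < x, g β < μ.ord) : (⨆ β : Iio x, g β) < μ.ord := by
  refine Ordinal.lift_iSup_lt_of_lt_cof ?_ fun β => hg β β.2
  rw [Cardinal.mk_Iio_ordinal, ← Ordinal.lift_cof, hμ.cof_ord, Cardinal.lift_lift,
    Cardinal.lift_lt]
  exact Cardinal.lt_ord.1 hx

theorem exists_diagInter_gt (hμ : μ.IsRegular) (hμ0 : ℵ₀ < μ) {C : Ordinal → Set Ordinal}
    (hC : ∀ β < μ.ord, IsClubIn (C β) μ.ord) {β₀ : Ordinal} (hβ₀ : β₀ < μ.ord) :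
    ∃ δ ∈ diagInter C μ.ord, β₀ < δ ∧ δ < μ.ord := by
  have hord : IsSuccLimit μ.ord := Cardinal.isSuccLimit_ord hμ0.le
  choose! next hnextC hlt_next hnext_lt using fun β (hβ : β < μ.ord) => (hC β hβ).2.2
  -- `F x` bounds `next β x` for all `β < x` at once; its closure point `δ` is in every `C β`, `β < δ`.
  set F : Ordinal → Ordinal := fun x => succ (max x (⨆ β : Iio x, next β x))
  have hlt_F : ∀ x, x < F x := fun x => (le_max_left _ _).trans_lt (lt_succ _)
  have hnext_lt_F : ∀ x, ∀ β < x, next β x < F x := fun x β hβ =>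
    ((Ordinal.le_iSup (fun β : Iio x => next β x) ⟨β, hβ⟩).trans (le_max_right _ _)).trans_lt
      (lt_succ _)
  have hF_lt : ∀ x < μ.ord, F x < μ.ord := fun x hx => hord.succ_lt (max_lt hx
    (iSup_Iio_lt_ord hμ hx fun β hβ => hnext_lt β (hβ.trans hx) x hx))
  set δ := Ordinal.nfp F (succ β₀)
  have hδ : δ < μ.ord :=
    Cardinal.nfp_lt_ord_of_isRegular hμ hμ0.ne' hF_lt (hord.succ_lt hβ₀)
  refine ⟨δ, ⟨hδ, fun β hβ => (hC β (hβ.trans hδ)).2.1 δ hδ (Ordinal.isSuccLimit_nfp hlt_F _)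
    fun γ hγ => ?_⟩, (lt_succ β₀).trans_le (Ordinal.le_nfp F _), hδ⟩
  obtain ⟨y, hy, hFy⟩ := Ordinal.exists_lt_apply_le_nfp F _ (max_lt hβ hγ)
  have hyμ : y < μ.ord := ((hlt_F y).trans_le hFy).trans hδ
  exact ⟨next β y, hnextC β (hβ.trans hδ) y hyμ,
    ((le_max_right β γ).trans_lt hy).trans (hlt_next β (hβ.trans hδ) y hyμ),
    (hnext_lt_F y β ((le_max_left β γ).trans_lt hy)).trans_le hFy⟩

theorem isClubIn_diagInter (hμ : μ.IsRegular) (hμ0 : ℵ₀ < μ) {C : Ordinal → Set Ordinal}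
    (hC : ∀ β < μ.ord, IsClubIn (C β) μ.ord) : IsClubIn (diagInter C μ.ord) μ.ord :=
  ⟨fun _ hδ => hδ.1, fun _ hδ hδlim happ => diagInter_closed hC hδ hδlim happ,
    fun _ hβ => exists_diagInter_gt hμ hμ0 hC hβ⟩

/-- Fodor's pressing-down lemma. -/
theorem IsStationaryIn.exists_isStationaryIn_fiber (hμ : μ.IsRegular) (hμ0 : ℵ₀ < μ)
    {S : Set Ordinal} (hS : IsStationaryIn S μ.ord) (g : Ordinal → Ordinal)
    (hg : ∀ δ ∈ S, δ < μ.ord → g δ < δ) :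
    ∃ β < μ.ord, IsStationaryIn {δ ∈ S | g δ = β} μ.ord := by
  by_contra! h
  have hclub : ∀ β < μ.ord, ∃ C, IsClubIn C μ.ord ∧ ¬({δ ∈ S | g δ = β} ∩ C).Nonempty :=
    fun β hβ => by simpa [IsStationaryIn] using h β hβ
  choose! C hC hdisj using hclub
  obtain ⟨δ, hδS, hδ⟩ := hS _ (isClubIn_diagInter hμ hμ0 hC)
  have hgδ : g δ < δ := hg δ hδS hδ.1
  exact hdisj (g δ) (hgδ.trans hδ.1) ⟨δ, ⟨hδS, rfl⟩, hδ.2 _ hgδ⟩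

end Regular

theorem stmt11_general (μ : Cardinal) (hμ : μ.IsRegular) (hμ0 : Cardinal.aleph0 < μ)
    (T : Ordinal → Set BSeq) (a : Ordinal → Ordinal) (f : Ordinal → BSeq → BSeq)
    (hcond : ∀ ξ < μ.ord, IsTree (a ξ) (T ξ) ∧ IsWitness (a ξ) (T ξ) (f ξ) ∧ a ξ < μ.ord)
    (hmono : ∀ ζ ξ, ζ < ξ → ξ < μ.ord → T ζ ⊆ T ξ ∧ a ζ < a ξ ∧
      ∀ η ∈ T ζ, (f ζ η).IsInitSeg (f ξ η))
    (ρ : BSeq) (hρ : ρ.len = μ.ord)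
    (hρT : ∀ β < μ.ord, ρ.restrict β ∈ ⋃ ξ ∈ Set.Iio μ.ord, T ξ)
    (Splus : Set Ordinal) (hSplus : IsStationaryIn Splus μ.ord)
    (hSp : ∀ δ ∈ Splus, Order.IsSuccLimit δ ∧ a δ = δ ∧ ∃ η ∈ T δ, f δ η = ρ.restrict δ) :
    ∃ ξs < μ.ord, ∃ ρs ∈ T ξs,
      IsStationaryIn {δ ∈ Splus | f δ ρs = ρ.restrict δ} μ.ord ∧
      ∀ ξ, ξs ≤ ξ → ξ < μ.ord → (f ξ ρs).IsInitSeg ρ := by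
  have hord : IsSuccLimit μ.ord := Cardinal.isSuccLimit_ord hμ0.le
  choose! η hηT hηf using fun δ hδ => (hSp δ hδ).2.2
  have hη : ∀ δ ∈ Splus, δ < μ.ord → (η δ).len < δ ∧ η δ = ρ.restrict (η δ).len := by
    intro δ hδ hδμ
    have hstrict := ((hcond δ hδμ).2.1 _ (hηT δ hδ)).2
    rw [hηf δ hδ] at hstrict
    exact ⟨hstrict.2.trans_eq (BSeq.len_restrict_of_le (hρ ▸ hδμ.le)),
      (hstrict.1.trans (ρ.restrict_isInitSeg δ)).eq_restrict⟩
  obtain ⟨β, hβ, hstat⟩ :=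
    hSplus.exists_isStationaryIn_fiber hμ hμ0 (fun δ => (η δ).len) fun δ hδ hδμ => (hη δ hδ hδμ).1
  have hfβ : ∀ δ ∈ {δ ∈ Splus | (η δ).len = β}, δ < μ.ord → f δ (ρ.restrict β) = ρ.restrict δ :=
    fun δ hδ hδμ => by rw [← hδ.2, ← (hη δ hδ.1 hδμ).2, hηf δ hδ.1]
  obtain ⟨ξs, hξs, hρsT⟩ := mem_iUnion₂.1 (hρT β hβ)
  refine ⟨ξs, hξs, ρ.restrict β, hρsT,
    hstat.mono fun δ hδ => ⟨hδ.1.1, hfβ δ hδ.1 hδ.2⟩, fun ξ hξsξ hξ => ?_⟩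
  obtain ⟨δ, hδ, hξδ, hδμ⟩ := hstat.exists_gt hord hξ
  have hρsTξ : ρ.restrict β ∈ T ξ :=
    hξsξ.eq_or_lt.elim (· ▸ hρsT) fun hlt => (hmono ξs ξ hlt hξ).1 hρsT
  exact ((hmono ξ δ hξδ hδμ).2.2 _ hρsTξ).trans (hfβ δ hδ hδμ ▸ ρ.restrict_isInitSeg δ)

theorem stmt11 (μ : Cardinal) (hμ : μ.IsRegular) (hμ0 : Cardinal.aleph0 < μ)
    (T : Ordinal → Set BSeq) (a : Ordinal → Ordinal) (f : Ordinal → BSeq → BSeq)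
    (hcond : ∀ ξ < μ.ord, IsTree (a ξ) (T ξ) ∧ IsWitness (a ξ) (T ξ) (f ξ) ∧ a ξ < μ.ord)
    (hmono : ∀ ζ ξ, ζ < ξ → ξ < μ.ord → T ζ ⊆ T ξ ∧ a ζ < a ξ ∧
      ∀ η ∈ T ζ, (f ζ η).IsInitSeg (f ξ η))
    (hcont : ∀ ξ, Order.IsSuccLimit ξ → ξ < μ.ord → T ξ = ⋃ ζ ∈ Set.Iio ξ, T ζ)
    (hsup : ∀ β < μ.ord, ∃ ξ < μ.ord, β < a ξ)
    (ρ : BSeq) (hρ : ρ.len = μ.ord)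
    (hρT : ∀ β < μ.ord, ρ.restrict β ∈ ⋃ ξ ∈ Set.Iio μ.ord, T ξ)
    (Splus : Set Ordinal) (hSplus : IsStationaryIn Splus μ.ord)
    (hSp : ∀ δ ∈ Splus, Order.IsSuccLimit δ ∧ a δ = δ ∧ ∃ η ∈ T δ, f δ η = ρ.restrict δ) :
    ∃ ξs < μ.ord, ∃ ρs ∈ T ξs,
      IsStationaryIn {δ ∈ Splus | f δ ρs = ρ.restrict δ} μ.ord ∧
      ∀ ξ, ξs ≤ ξ → ξ < μ.ord → (f ξ ρs).IsInitSeg ρ :=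
  stmt11_general μ hμ hμ0 T a f hcond hmono ρ hρ hρT Splus hSplus hSp
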